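/- Let Ω ⊂ E, F, h, 𝔹 be as above and suppose the Hartogs domain Ω_h = {(z,w) ∈ Ω × F : h(z,w) < 1} is hyperbolic. Then Ω is hyperbolic and inf_{(z,w) ∈ K × ∂𝔹} h(z,w) > 0 for every compact K ⊂ Ω. -/

import Mathlib

open Filter Metric Set Topology MeasureTheory

/-- The Lempert function of a domain `Ω` in a complex Banach space. -/
noncomputable def lempert {E : Type*} [NormedAddCommGroup E] [NormedSpace ℂ E]
    (Ω : Set E) (z w : E) : ℝ :=
  sInf {r : ℝ | ∃ (f : ℂ → E) (l : ℂ), DifferentiableOn ℂ f (ball 0 1) ∧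
    MapsTo f (ball 0 1) Ω ∧ f 0 = z ∧ f l = w ∧ l ∈ ball (0:ℂ) 1 ∧ r = ‖l‖}

/-- The Poincaré distance from `0` to a point at "radius" `r`. -/
noncomputable def poincareDist (r : ℝ) : ℝ := (1/2) * Real.log ((1+r)/(1-r))

/-- The Kobayashi pseudo-distance of a domain `Ω`, defined via chains. -/
noncomputable def kobayashi {E : Type*} [NormedAddCommGroup E] [NormedSpace ℂ E]
    (Ω : Set E) (z w : E) : ℝ :=
  sInf {r : ℝ | ∃ (n : ℕ) (c : ℕ → E), c 0 = z ∧ c n = w ∧ (∀ i, i ≤ n → c i ∈ Ω) ∧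
    r = ∑ i ∈ Finset.range n, poincareDist (lempert Ω (c i) (c (i+1)))}

/-- `Ω` is (Kobayashi) hyperbolic: `kobayashi Ω` is a distance defining the norm topology. -/
def IsHyperbolic {E : Type*} [NormedAddCommGroup E] [NormedSpace ℂ E] (Ω : Set E) : Prop :=
  (∀ z ∈ Ω, ∀ w ∈ Ω, kobayashi Ω z w = 0 → z = w) ∧
  (∀ z ∈ Ω, ∀ ε > 0, ∃ δ > 0, ∀ w ∈ Ω, kobayashi Ω z w < δ → ‖w - z‖ < ε) ∧
  (∀ z ∈ Ω, ∀ ε > 0, ∃ δ > 0, ∀ w ∈ Ω, ‖w - z‖ < δ → kobayashi Ω z w < ε)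

/-- A sequence in `Ω` which is Cauchy for the Kobayashi pseudo-distance. -/
def KCauchy {E : Type*} [NormedAddCommGroup E] [NormedSpace ℂ E]
    (Ω : Set E) (x : ℕ → E) : Prop :=
  ∀ ε > 0, ∃ N, ∀ m ≥ N, ∀ n ≥ N, kobayashi Ω (x m) (x n) < ε

/-- `Ω` is complete hyperbolic. -/
def IsCompleteHyperbolic {E : Type*} [NormedAddCommGroup E] [NormedSpace ℂ E]
    (Ω : Set E) : Prop :=
  IsHyperbolic Ω ∧ ∀ x : ℕ → E, (∀ n, x n ∈ Ω) → KCauchy Ω x →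
    ∃ p ∈ Ω, Tendsto x atTop (nhds p)

/-- The filter of neighborhoods of `∞` (traces on `Ω` taken by `⊓ 𝓟 Ω` where needed). -/
noncomputable def atInfFilter (E : Type*) [NormedAddCommGroup E] : Filter E :=
  Filter.comap (fun z : E => ‖z‖) Filter.atTop

/-- The boundary point described by the filter `l` (either `𝓝 a` for `a ∈ ∂Ω`, or the
filter at `∞`) is a `k'`-point of `Ω`: no `k_Ω`-Cauchy sequence of `Ω` converges to it. -/
def KPrimeAt {E : Type*} [NormedAddCommGroup E] [NormedSpace ℂ E]
    (Ω : Set E) (l : Filter E) : Prop :=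
  ¬ ∃ x : ℕ → E, (∀ n, x n ∈ Ω) ∧ KCauchy Ω x ∧ Tendsto x atTop l

/-- A real-valued function is subharmonic on `U ⊆ ℂ`: upper semicontinuous and
satisfying the sub-mean-value inequality on closed disks contained in `U`. -/
def SubharmonicOnR (v : ℂ → ℝ) (U : Set ℂ) : Prop :=
  UpperSemicontinuousOn v U ∧ ∀ c : ℂ, ∀ r : ℝ, 0 < r → closedBall c r ⊆ U →
    v c ≤ (2 * Real.pi)⁻¹ *
      ∫ θ in (0:ℝ)..(2*Real.pi), v (c + (r : ℂ) * Complex.exp (θ * Complex.I))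

/-- Plurisubharmonicity on a domain of a complex Banach space. -/
def PlurisubharmonicOn {E : Type*} [NormedAddCommGroup E] [NormedSpace ℂ E]
    (u : E → ℝ) (Ω : Set E) : Prop :=
  UpperSemicontinuousOn u Ω ∧
    ∀ a b : E, SubharmonicOnR (fun t => u (a + t • b)) {t : ℂ | a + t • b ∈ Ω}

/-!
The inclusion `z ↦ (z, 0)` of `Ω` into `Ω_h` has the holomorphic left inverse `(z, w) ↦ z`, so it
preserves the Lempert function and does not increase the Kobayashi distance; hyperbolicity of `Ω_h`
therefore passes to `Ω`. If `h(z, w) < c` with `‖w‖ = 1`, the vertical disc `λ ↦ (z, (λ / c) • w)`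
lies in `Ω_h` and joins `(z, 0)` to `(z, w / 2)` at Kobayashi distance `O(c)`. Near a point
`(z₀, 0)` hyperbolicity forbids such points, which are at norm distance `1/2` from `(z₀, 0)`; so `h`
is bounded below on the unit sphere locally uniformly in `z`, hence uniformly on compact sets.
-/

lemma le_csInf_add_csInf {s t : Set ℝ} (hs : s.Nonempty) (ht : t.Nonempty) {x : ℝ}
    (h : ∀ a ∈ s, ∀ b ∈ t, x ≤ a + b) : x ≤ sInf s + sInf t := by
  have key : ∀ a ∈ s, x - a ≤ sInf t := fun a ha =>
    le_csInf ht fun b hb => by linarith [h a ha b hb]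
  have : x - sInf t ≤ sInf s := le_csInf hs fun a ha => by linarith [key a ha]
  linarith

theorem IsCompact.exists_pos_forall_of_eventually {X : Type*} [TopologicalSpace X] {K : Set X}
    (hK : IsCompact K) {Q : X → ℝ → Prop} (hQ : ∀ x c c', c' ≤ c → Q x c → Q x c')
    (hloc : ∀ x ∈ K, ∃ c > 0, ∀ᶠ y in 𝓝 x, Q y c) : ∃ c > 0, ∀ x ∈ K, Q x c := by
  refine hK.induction_on ⟨1, one_pos, by simp⟩ ?_ ?_ ?_
  · rintro s t hst ⟨c, hc, hQt⟩
    exact ⟨c, hc, fun x hx => hQt x (hst hx)⟩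
  · rintro s t ⟨c, hc, hQs⟩ ⟨c', hc', hQt⟩
    refine ⟨min c c', lt_min hc hc', ?_⟩
    rintro x (hx | hx)
    · exact hQ x c _ (min_le_left _ _) (hQs x hx)
    · exact hQ x c' _ (min_le_right _ _) (hQt x hx)
  · intro x hx
    obtain ⟨c, hc, hev⟩ := hloc x hx
    exact ⟨{y | Q y c}, mem_nhdsWithin_of_mem_nhds hev, c, hc, fun _ hy => hy⟩

lemma poincareDist_nonneg {r : ℝ} (h0 : 0 ≤ r) (h1 : r < 1) : 0 ≤ poincareDist r := by
  have : (1:ℝ) ≤ (1 + r) / (1 - r) := (one_le_div (by linarith)).2 (by linarith)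
  exact mul_nonneg (by norm_num) (Real.log_nonneg this)

lemma poincareDist_mono {a b : ℝ} (ha : 0 ≤ a) (hab : a ≤ b) (hb : b < 1) :
    poincareDist a ≤ poincareDist b := by
  have h1 : 0 < 1 - b := by linarith
  have h2 : 0 < 1 - a := by linarith
  have hle : (1 + a) / (1 - a) ≤ (1 + b) / (1 - b) := by
    rw [div_le_div_iff₀ h2 h1]; nlinarith
  exact mul_le_mul_of_nonneg_left (Real.log_le_log (div_pos (by linarith) h2) hle) (by norm_num)

lemma poincareDist_le_two_mul {r : ℝ} (h0 : 0 ≤ r) (h1 : r ≤ 1 / 2) :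
    poincareDist r ≤ 2 * r := by
  have hr : 0 < 1 - r := by linarith
  have hlog := Real.log_le_sub_one_of_pos (show 0 < (1 + r) / (1 - r) by positivity)
  have : (1 + r) / (1 - r) - 1 ≤ 4 * r := by
    rw [sub_le_iff_le_add, div_le_iff₀ hr]; nlinarith
  unfold poincareDist; linarith

section Kobayashi

variable {E : Type*} [NormedAddCommGroup E] [NormedSpace ℂ E]
variable {E' : Type*} [NormedAddCommGroup E'] [NormedSpace ℂ E']
variable {Ω : Set E} {Ω' : Set E'}

def discRadii (Ω : Set E) (z w : E) : Set ℝ :=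
  {r : ℝ | ∃ (f : ℂ → E) (l : ℂ), DifferentiableOn ℂ f (ball 0 1) ∧
    MapsTo f (ball 0 1) Ω ∧ f 0 = z ∧ f l = w ∧ l ∈ ball (0:ℂ) 1 ∧ r = ‖l‖}

lemma discRadii_bddBelow (Ω : Set E) (z w : E) : BddBelow (discRadii Ω z w) :=
  ⟨0, by rintro _ ⟨f, l, -, -, -, -, -, rfl⟩; exact norm_nonneg l⟩

lemma lempert_nonneg (Ω : Set E) (z w : E) : 0 ≤ lempert Ω z w :=
  Real.sInf_nonneg <| by rintro _ ⟨f, l, -, -, -, -, -, rfl⟩; exact norm_nonneg l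

lemma lempert_le_norm_of_disc {f : ℂ → E} (hf : DifferentiableOn ℂ f (ball 0 1))
    (hfΩ : MapsTo f (ball 0 1) Ω) {l : ℂ} (hl : ‖l‖ < 1) : lempert Ω (f 0) (f l) ≤ ‖l‖ :=
  csInf_le (discRadii_bddBelow Ω _ _) ⟨f, l, hf, hfΩ, rfl, rfl, mem_ball_zero_iff.2 hl, rfl⟩

lemma lempert_lt_one (Ω : Set E) (z w : E) : lempert Ω z w < 1 := by
  rcases (discRadii Ω z w).eq_empty_or_nonempty with h | ⟨r, f, l, hf, hfΩ, rfl, rfl, hl, rfl⟩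
  · change sInf (discRadii Ω z w) < 1
    rw [h, Real.sInf_empty]; exact one_pos
  · exact (lempert_le_norm_of_disc hf hfΩ (mem_ball_zero_iff.1 hl)).trans_lt
      (mem_ball_zero_iff.1 hl)

lemma discRadii_subset_of_mapsTo {φ : E → E'} (hφ : Differentiable ℂ φ) (hφΩ : MapsTo φ Ω Ω')
    (z w : E) : discRadii Ω z w ⊆ discRadii Ω' (φ z) (φ w) := by
  rintro r ⟨f, l, hf, hfΩ, rfl, rfl, hl, rfl⟩
  exact ⟨φ ∘ f, l, hφ.comp_differentiableOn hf, hφΩ.comp hfΩ, rfl, rfl, hl, rfl⟩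

lemma lempert_comp_of_leftInverse {φ : E → E'} {ψ : E' → E} (hφ : Differentiable ℂ φ)
    (hψ : Differentiable ℂ ψ) (hφΩ : MapsTo φ Ω Ω') (hψΩ : MapsTo ψ Ω' Ω)
    (hψφ : Function.LeftInverse ψ φ) (z w : E) :
    lempert Ω' (φ z) (φ w) = lempert Ω z w := by
  change sInf (discRadii Ω' (φ z) (φ w)) = sInf (discRadii Ω z w)
  refine congrArg sInf (Subset.antisymm ?_ (discRadii_subset_of_mapsTo hφ hφΩ z w))
  simpa only [hψφ _] using discRadii_subset_of_mapsTo hψ hψΩ (φ z) (φ w)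

def chainLengths (Ω : Set E) (z w : E) : Set ℝ :=
  {r : ℝ | ∃ (n : ℕ) (c : ℕ → E), c 0 = z ∧ c n = w ∧ (∀ i, i ≤ n → c i ∈ Ω) ∧
    r = ∑ i ∈ Finset.range n, poincareDist (lempert Ω (c i) (c (i+1)))}

lemma zero_mem_lowerBounds_chainLengths (Ω : Set E) (z w : E) :
    0 ∈ lowerBounds (chainLengths Ω z w) := by
  rintro _ ⟨n, c, -, -, -, rfl⟩
  exact Finset.sum_nonneg fun i _ =>
    poincareDist_nonneg (lempert_nonneg _ _ _) (lempert_lt_one _ _ _)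

lemma chainLengths_bddBelow (Ω : Set E) (z w : E) : BddBelow (chainLengths Ω z w) :=
  ⟨0, zero_mem_lowerBounds_chainLengths Ω z w⟩

lemma kobayashi_nonneg (Ω : Set E) (z w : E) : 0 ≤ kobayashi Ω z w :=
  Real.sInf_nonneg fun _ hr => zero_mem_lowerBounds_chainLengths Ω z w hr

lemma poincareDist_lempert_mem_chainLengths {z w : E} (hz : z ∈ Ω) (hw : w ∈ Ω) :
    poincareDist (lempert Ω z w) ∈ chainLengths Ω z w := by
  refine ⟨1, fun i => if i = 0 then z else w, if_pos rfl, by simp, ?_, by simp⟩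
  intro i _
  dsimp only
  split_ifs <;> assumption

lemma kobayashi_le_poincareDist_lempert {z w : E} (hz : z ∈ Ω) (hw : w ∈ Ω) :
    kobayashi Ω z w ≤ poincareDist (lempert Ω z w) :=
  csInf_le (chainLengths_bddBelow Ω z w) (poincareDist_lempert_mem_chainLengths hz hw)

lemma kobayashi_le_poincareDist_of_disc {f : ℂ → E} (hf : DifferentiableOn ℂ f (ball 0 1))
    (hfΩ : MapsTo f (ball 0 1) Ω) {l : ℂ} (hl : ‖l‖ < 1) :
    kobayashi Ω (f 0) (f l) ≤ poincareDist ‖l‖ :=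
  (kobayashi_le_poincareDist_lempert (hfΩ (mem_ball_self one_pos))
    (hfΩ (mem_ball_zero_iff.2 hl))).trans
    (poincareDist_mono (lempert_nonneg _ _ _) (lempert_le_norm_of_disc hf hfΩ hl) hl)

lemma add_mem_chainLengths {z w v : E} {a b : ℝ} (ha : a ∈ chainLengths Ω z w)
    (hb : b ∈ chainLengths Ω w v) : a + b ∈ chainLengths Ω z v := by
  obtain ⟨n, c, rfl, hcn, hcΩ, rfl⟩ := ha
  obtain ⟨m, d, hd0, rfl, hdΩ, rfl⟩ := hb
  set e : ℕ → E := fun i => if i ≤ n then c i else d (i - n)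
  have he_left : ∀ i ≤ n, e i = c i := fun i hi => if_pos hi
  have he_right : ∀ j, e (n + j) = d j := by
    intro j
    rcases j.eq_zero_or_pos with rfl | hj
    · rw [add_zero, he_left n le_rfl, hcn, hd0]
    · exact (if_neg (by omega)).trans (by rw [Nat.add_sub_cancel_left])
  refine ⟨n + m, e, he_left 0 (Nat.zero_le n), he_right m, fun i hi => ?_, ?_⟩
  · rcases le_or_gt i n with hin | hin
    · exact he_left i hin ▸ hcΩ i hin
    · obtain ⟨j, rfl⟩ := Nat.exists_eq_add_of_le hin.le
      exact he_right j ▸ hdΩ j (by omega)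
  · rw [Finset.sum_range_add]
    congr 1
    · refine Finset.sum_congr rfl fun i hi => ?_
      have hi := Finset.mem_range.1 hi
      rw [he_left i hi.le, he_left (i + 1) hi]
    · refine Finset.sum_congr rfl fun j _ => ?_
      rw [he_right, add_assoc, he_right]

lemma kobayashi_triangle {z w v : E} (hz : z ∈ Ω) (hw : w ∈ Ω) (hv : v ∈ Ω) :
    kobayashi Ω z v ≤ kobayashi Ω z w + kobayashi Ω w v :=
  le_csInf_add_csInf ⟨_, poincareDist_lempert_mem_chainLengths hz hw⟩
    ⟨_, poincareDist_lempert_mem_chainLengths hw hv⟩ fun _ ha _ hb =>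
      csInf_le (chainLengths_bddBelow Ω z v) (add_mem_chainLengths ha hb)

lemma kobayashi_comp_le_of_leftInverse {φ : E → E'} {ψ : E' → E} (hφ : Differentiable ℂ φ)
    (hψ : Differentiable ℂ ψ) (hφΩ : MapsTo φ Ω Ω') (hψΩ : MapsTo ψ Ω' Ω)
    (hψφ : Function.LeftInverse ψ φ) {z w : E} (hz : z ∈ Ω) (hw : w ∈ Ω) :
    kobayashi Ω' (φ z) (φ w) ≤ kobayashi Ω z w := by
  refine csInf_le_csInf (chainLengths_bddBelow _ _ _)
    ⟨_, poincareDist_lempert_mem_chainLengths hz hw⟩ ?_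
  rintro _ ⟨n, c, rfl, rfl, hcΩ, rfl⟩
  refine ⟨n, φ ∘ c, rfl, rfl, fun i hi => hφΩ (hcΩ i hi), ?_⟩
  simp only [Function.comp_apply, lempert_comp_of_leftInverse hφ hψ hφΩ hψΩ hψφ]

lemma kobayashi_le_poincareDist_of_ball_subset {z w : E} {ρ r : ℝ} (hρ : 0 < ρ)
    (hb : ball z ρ ⊆ Ω) (hr0 : 0 < r) (hr1 : r < 1) (hw : ‖w - z‖ ≤ r * ρ) :
    kobayashi Ω z w ≤ poincareDist r := by
  have hdisc : MapsTo (fun l : ℂ => z + (l / r) • (w - z)) (ball 0 1) Ω := by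
    intro l hl
    apply hb
    rw [mem_ball_iff_norm, add_sub_cancel_left, norm_smul, norm_div, Complex.norm_real,
      Real.norm_of_nonneg hr0.le]
    calc ‖l‖ / r * ‖w - z‖ ≤ ‖l‖ / r * (r * ρ) := by gcongr
      _ = ‖l‖ * ρ := by field_simp
      _ < ρ := mul_lt_of_lt_one_left hρ (mem_ball_zero_iff.1 hl)
  have hf : DifferentiableOn ℂ (fun l : ℂ => z + (l / r) • (w - z)) (ball 0 1) := by fun_prop
  have := kobayashi_le_poincareDist_of_disc hf hdisc (l := r)
    (by rwa [Complex.norm_real, Real.norm_of_nonneg hr0.le])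
  simpa [hr0.ne', Real.norm_of_nonneg hr0.le] using this

theorem IsOpen.exists_kobayashi_lt (hΩ : IsOpen Ω) {z : E} (hz : z ∈ Ω) {ε : ℝ} (hε : 0 < ε) :
    ∃ δ > 0, ∀ w ∈ Ω, ‖w - z‖ < δ → kobayashi Ω z w < ε := by
  obtain ⟨ρ, hρ, hb⟩ := Metric.isOpen_iff.1 hΩ z hz
  set r := min (1 / 2) (ε / 4)
  have hr0 : 0 < r := by positivity
  have hr_half : r ≤ 1 / 2 := min_le_left _ _
  have hrε : r ≤ ε / 4 := min_le_right _ _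
  refine ⟨r * ρ, by positivity, fun w _ hw => ?_⟩
  calc kobayashi Ω z w ≤ poincareDist r :=
        kobayashi_le_poincareDist_of_ball_subset hρ hb hr0 (by linarith) hw.le
    _ ≤ 2 * r := poincareDist_le_two_mul hr0.le hr_half
    _ < ε := by linarith

theorem IsHyperbolic.of_leftInverse (hΩ : IsOpen Ω) {φ : E → E'} {ψ : E' → E}
    (hφ : Differentiable ℂ φ) (hψ : Differentiable ℂ ψ) (hφΩ : MapsTo φ Ω Ω')
    (hψΩ : MapsTo ψ Ω' Ω) (hψφ : Function.LeftInverse ψ φ) (hyp : IsHyperbolic Ω') :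
    IsHyperbolic Ω := by
  have hle {z w : E} (hz : z ∈ Ω) (hw : w ∈ Ω) :=
    kobayashi_comp_le_of_leftInverse hφ hψ hφΩ hψΩ hψφ hz hw
  refine ⟨fun z hz w hw h0 => hψφ.injective ?_, fun z hz ε hε => ?_,
    fun z hz ε hε => hΩ.exists_kobayashi_lt hz hε⟩
  · exact hyp.1 _ (hφΩ hz) _ (hφΩ hw)
      (le_antisymm (h0 ▸ hle hz hw) (kobayashi_nonneg _ _ _))
  · obtain ⟨η, hη, hψη⟩ :=
      Metric.continuousAt_iff.1 (hψ.continuous.continuousAt (x := φ z)) ε hε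
    obtain ⟨δ, hδ, hkob⟩ := hyp.2.1 _ (hφΩ hz) η hη
    refine ⟨δ, hδ, fun w hw hwz => ?_⟩
    have hnear : dist (φ w) (φ z) < η := by
      rw [dist_eq_norm]; exact hkob _ (hφΩ hw) ((hle hz hw).trans_lt hwz)
    simpa only [hψφ w, hψφ z, dist_eq_norm] using hψη hnear

end Kobayashi

section Hartogs

variable {E F : Type*} [NormedAddCommGroup F] [NormedSpace ℂ F] {Ω : Set E} {h : E × F → ℝ}

def hartogsDomain (Ω : Set E) (h : E × F → ℝ) : Set (E × F) :=
  {p : E × F | p.1 ∈ Ω ∧ h p < 1}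

lemma mk_zero_mem_hartogsDomain
    (hhom : ∀ z ∈ Ω, ∀ w : F, ∀ l : ℂ, h (z, l • w) = ‖l‖ * h (z, w)) {z : E} (hz : z ∈ Ω) :
    (z, (0 : F)) ∈ hartogsDomain Ω h :=
  ⟨hz, by simpa using (hhom z hz 0 0).trans_lt (by norm_num : ‖(0 : ℂ)‖ * h (z, 0) < 1)⟩

variable [NormedAddCommGroup E] [NormedSpace ℂ E]

lemma kobayashi_hartogsDomain_vertical_le
    (hhom : ∀ z ∈ Ω, ∀ w : F, ∀ l : ℂ, h (z, l • w) = ‖l‖ * h (z, w))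
    {z : E} (hz : z ∈ Ω) {w : F} {r : ℝ} (hr : 0 < r) (hwr : h (z, w) ≤ r) {s : ℂ}
    (hs : ‖s‖ * r < 1) :
    kobayashi (hartogsDomain Ω h) (z, 0) (z, s • w) ≤ poincareDist (‖s‖ * r) := by
  have hdisc : MapsTo (fun l : ℂ => (z, (l / r) • w)) (ball 0 1) (hartogsDomain Ω h) := by
    intro l hl
    refine ⟨hz, ?_⟩
    dsimp only
    rw [hhom z hz, norm_div, Complex.norm_real, Real.norm_of_nonneg hr.le]
    calc ‖l‖ / r * h (z, w) ≤ ‖l‖ / r * r := by gcongr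
      _ = ‖l‖ := by field_simp
      _ < 1 := mem_ball_zero_iff.1 hl
  have hf : DifferentiableOn ℂ (fun l : ℂ => (z, (l / r) • w)) (ball 0 1) := by fun_prop
  have hsr : ‖s * r‖ = ‖s‖ * r := by
    rw [norm_mul, Complex.norm_real, Real.norm_of_nonneg hr.le]
  have := kobayashi_le_poincareDist_of_disc hf hdisc (l := s * r) (hsr ▸ hs)
  simpa [hr.ne', hsr, abs_of_pos hr] using this

theorem exists_pos_eventually_le_of_isHyperbolic_hartogsDomain (hΩ : IsOpen Ω)
    (hhom : ∀ z ∈ Ω, ∀ w : F, ∀ l : ℂ, h (z, l • w) = ‖l‖ * h (z, w))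
    (hhyp : IsHyperbolic (hartogsDomain Ω h)) {z₀ : E} (hz₀ : z₀ ∈ Ω) :
    ∃ c > 0, ∀ᶠ z in 𝓝 z₀, ∀ w : F, ‖w‖ = 1 → c ≤ h (z, w) := by
  have hp₀ := mk_zero_mem_hartogsDomain hhom hz₀
  obtain ⟨δ, hδ, hnorm⟩ := hhyp.2.1 _ hp₀ (1 / 2) (by norm_num)
  obtain ⟨η, hη, hkob⟩ := hhyp.2.2 _ hp₀ (δ / 2) (by positivity)
  set c := min (δ / 4) 1
  have hc : 0 < c := by positivity
  have hcδ : c ≤ δ / 4 := min_le_left _ _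
  have hc1 : c ≤ 1 := min_le_right _ _
  refine ⟨c, hc, ?_⟩
  filter_upwards [hΩ.mem_nhds hz₀, ball_mem_nhds z₀ hη] with z hz hzη w hw
  by_contra! hlt
  have hhalf : ‖(1 / 2 : ℂ)‖ = 1 / 2 := by norm_num
  have hp := mk_zero_mem_hartogsDomain hhom hz
  have hq : (z, (1 / 2 : ℂ) • w) ∈ hartogsDomain Ω h := by
    refine ⟨hz, ?_⟩
    rw [hhom z hz, hhalf]
    linarith
  have hk₁ : kobayashi (hartogsDomain Ω h) (z₀, 0) (z, 0) < δ / 2 :=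
    hkob _ hp (by simpa [Prod.norm_def, dist_eq_norm, hη.le] using hzη)
  have hk₂ : kobayashi (hartogsDomain Ω h) (z, 0) (z, (1 / 2 : ℂ) • w) ≤ c :=
    calc _ ≤ poincareDist (‖(1 / 2 : ℂ)‖ * c) :=
          kobayashi_hartogsDomain_vertical_le hhom hz hc hlt.le (by rw [hhalf]; linarith)
      _ ≤ 2 * (‖(1 / 2 : ℂ)‖ * c) :=
          poincareDist_le_two_mul (by positivity) (by rw [hhalf]; linarith)
      _ = c := by rw [hhalf]; ring
  have hclose := hnorm _ hq ((kobayashi_triangle hp₀ hp hq).trans_lt (by linarith))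
  have hfar : 1 / 2 ≤ ‖((z, (1 / 2 : ℂ) • w) - (z₀, 0) : E × F)‖ := by
    rw [Prod.norm_def]
    refine le_trans ?_ (le_max_right _ _)
    simp [norm_smul, hw]
  linarith

end Hartogs

theorem hartogs_hyperbolic_necessary_general {E F : Type*} [NormedAddCommGroup E]
    [NormedSpace ℂ E] [NormedAddCommGroup F] [NormedSpace ℂ F]
    (Ω : Set E) (hΩo : IsOpen Ω)
    (h : E × F → ℝ)
    (hhom : ∀ z ∈ Ω, ∀ w : F, ∀ l : ℂ, h (z, l • w) = ‖l‖ * h (z, w))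
    (hhyp : IsHyperbolic {p : E × F | p.1 ∈ Ω ∧ h p < 1}) :
    IsHyperbolic Ω ∧ ∀ K : Set E, K ⊆ Ω → IsCompact K →
      ∃ c > (0:ℝ), ∀ z ∈ K, ∀ w : F, ‖w‖ = 1 → c ≤ h (z, w) := by
  change IsHyperbolic (hartogsDomain Ω h) at hhyp
  refine ⟨hhyp.of_leftInverse (φ := fun z => (z, (0 : F))) (ψ := Prod.fst) hΩo
    (by fun_prop) differentiable_fst (fun z hz => mk_zero_mem_hartogsDomain hhom hz)
    (fun p hp => hp.1) (fun _ => rfl), fun K hKΩ hK => ?_⟩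
  exact hK.exists_pos_forall_of_eventually (fun z c c' hc' hc w hw => hc'.trans (hc w hw))
    fun z hz => exists_pos_eventually_le_of_isHyperbolic_hartogsDomain hΩo hhom hhyp (hKΩ hz)

/-- Corollary 3.4, necessity: if the Hartogs domain `Ω_h` is hyperbolic then `Ω` is
hyperbolic and `h` is bounded below on `K × ∂𝔹` for every compact `K ⊆ Ω`. -/
theorem hartogs_hyperbolic_necessary {E F : Type*} [NormedAddCommGroup E]
    [NormedSpace ℂ E] [CompleteSpace E] [NormedAddCommGroup F] [NormedSpace ℂ F]
    [CompleteSpace F]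
    (Ω : Set E) (hΩo : IsOpen Ω) (hΩc : IsConnected Ω)
    (h : E × F → ℝ) (hnn : ∀ z ∈ Ω, ∀ w : F, 0 ≤ h (z, w))
    (husc : UpperSemicontinuousOn h (Ω ×ˢ (Set.univ : Set F)))
    (hhom : ∀ z ∈ Ω, ∀ w : F, ∀ l : ℂ, h (z, l • w) = ‖l‖ * h (z, w))
    (hhyp : IsHyperbolic {p : E × F | p.1 ∈ Ω ∧ h p < 1}) :
    IsHyperbolic Ω ∧ ∀ K : Set E, K ⊆ Ω → IsCompact K →
      ∃ c > (0:ℝ), ∀ z ∈ K, ∀ w : F, ‖w‖ = 1 → c ≤ h (z, w) :=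
  hartogs_hyperbolic_necessary_general Ω hΩo h hhom hhyp
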